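/- For all nonnegative real numbers a, b and every σ > 0, there exists a constant c > 0 depending only on σ such that (a - b)(a^σ - b^σ) ≥ c·|a^{(σ+1)/2} - b^{(σ+1)/2}|². -/

import Mathlib

/-!
With `p = (σ + 1) / 2`, `x = a ^ p`, `y = b ^ p` and `q = 2σ / (σ + 1) ∈ (0, 2)`, the inequality
reads `c (x - y)² ≤ (x ^ q - y ^ q) (x ^ (2 - q) - y ^ (2 - q))`. For `q ≤ 1` and `y ≤ x`,
concavity of `t ↦ t ^ q` gives `x ^ q - y ^ q ≥ q x ^ (q - 1) (x - y)` and monotonicity of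
`t ↦ t ^ (1 - q)` gives `x ^ (2 - q) - y ^ (2 - q) ≥ x ^ (1 - q) (x - y)`; multiplying yields the
bound with `c = q`. Exchanging `q` and `2 - q` handles `q ≥ 1`, so `c = min q (2 - q)` works.
-/

namespace Real

variable {x y : ℝ}

theorem mul_rpow_sub_one_mul_sub_le_rpow_sub_rpow {q : ℝ} (hq0 : 0 ≤ q) (hq1 : q ≤ 1)
    (hy : 0 ≤ y) (hx : 0 < x) :
    q * x ^ (q - 1) * (x - y) ≤ x ^ q - y ^ q := by
  have bernoulli : (y / x) ^ q ≤ 1 + q * (y / x - 1) := by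
    simpa using rpow_one_add_le_one_add_mul_self (s := y / x - 1)
      (by linarith [div_nonneg hy hx.le]) hq0 hq1
  have hxq : 0 < x ^ q := rpow_pos_of_pos hx q
  rw [div_rpow hy hx.le, div_le_iff₀ hxq] at bernoulli
  rw [rpow_sub_one hx.ne']
  calc q * (x ^ q / x) * (x - y) = x ^ q - (1 + q * (y / x - 1)) * x ^ q := by
        field_simp; ring
    _ ≤ x ^ q - y ^ q := by linarith

theorem rpow_sub_one_mul_sub_le_rpow_sub_rpow {r : ℝ} (hr : 1 ≤ r)
    (hy : 0 ≤ y) (hyx : y ≤ x) :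
    x ^ (r - 1) * (x - y) ≤ x ^ r - y ^ r := by
  have split : ∀ z : ℝ, 0 ≤ z → z ^ r = z ^ (r - 1) * z := fun z hz => by
    simpa using rpow_add' (y := r - 1) (z := 1) hz (by linarith)
  have mono : y ^ (r - 1) ≤ x ^ (r - 1) := rpow_le_rpow hy hyx (by linarith)
  rw [split x (hy.trans hyx), split y hy]
  nlinarith

theorem mul_sq_sub_le_rpow_sub_mul_rpow_sub {q : ℝ} (hq0 : 0 ≤ q) (hq1 : q ≤ 1)
    (hy : 0 ≤ y) (hyx : y ≤ x) :
    q * (x - y) ^ 2 ≤ (x ^ q - y ^ q) * (x ^ (2 - q) - y ^ (2 - q)) := by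
  rcases hyx.eq_or_lt with rfl | hlt
  · simp
  have hx : 0 < x := hy.trans_lt hlt
  have h₁ := mul_rpow_sub_one_mul_sub_le_rpow_sub_rpow hq0 hq1 hy hx
  have h₂ := rpow_sub_one_mul_sub_le_rpow_sub_rpow (r := 2 - q) (by linarith) hy hyx
  have hcancel : x ^ (q - 1) * x ^ (2 - q - 1) = 1 := by
    rw [← rpow_add hx, show q - 1 + (2 - q - 1) = 0 by ring, rpow_zero]
  have h₁_nonneg : 0 ≤ q * x ^ (q - 1) * (x - y) :=
    mul_nonneg (mul_nonneg hq0 (rpow_nonneg hx.le _)) (sub_nonneg.2 hyx)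
  have h₂_nonneg : 0 ≤ x ^ (2 - q - 1) * (x - y) :=
    mul_nonneg (rpow_nonneg hx.le _) (sub_nonneg.2 hyx)
  calc q * (x - y) ^ 2 = (q * x ^ (q - 1) * (x - y)) * (x ^ (2 - q - 1) * (x - y)) := by
        linear_combination (-(q * (x - y) ^ 2)) * hcancel
    _ ≤ (x ^ q - y ^ q) * (x ^ (2 - q) - y ^ (2 - q)) :=
        mul_le_mul h₁ h₂ h₂_nonneg (h₁_nonneg.trans h₁)

theorem min_mul_sq_sub_le_rpow_sub_mul_rpow_sub {q : ℝ} (hq0 : 0 ≤ q) (hq2 : q ≤ 2)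
    (hx : 0 ≤ x) (hy : 0 ≤ y) :
    min q (2 - q) * (x - y) ^ 2 ≤ (x ^ q - y ^ q) * (x ^ (2 - q) - y ^ (2 - q)) := by
  wlog hyx : y ≤ x generalizing x y
  · convert this hy hx (le_of_not_ge hyx) using 1 <;> ring
  rcases le_total q 1 with hq1 | hq1
  · exact (mul_le_mul_of_nonneg_right (min_le_left _ _) (sq_nonneg _)).trans
      (mul_sq_sub_le_rpow_sub_mul_rpow_sub hq0 hq1 hy hyx)
  · have := mul_sq_sub_le_rpow_sub_mul_rpow_sub (q := 2 - q) (by linarith) (by linarith) hy hyx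
    rw [sub_sub_cancel, mul_comm (x ^ (2 - q) - _)] at this
    exact (mul_le_mul_of_nonneg_right (min_le_right _ _) (sq_nonneg _)).trans this

end Real

open Real in
theorem stmt_0 (σ : ℝ) (hσ : 0 < σ) :
    ∃ c : ℝ, 0 < c ∧ ∀ a b : ℝ, 0 ≤ a → 0 ≤ b →
      c * |a ^ ((σ + 1) / 2) - b ^ ((σ + 1) / 2)| ^ 2 ≤ (a - b) * (a ^ σ - b ^ σ) := by
  set p := (σ + 1) / 2
  set q := 2 * σ / (σ + 1)
  have hq0 : 0 < q := by positivity
  have hq2 : q < 2 := by rw [div_lt_iff₀ (by positivity)]; linarith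
  have hpq : p * q = σ := by simp only [p, q]; field_simp
  have hp2q : p * (2 - q) = 1 := by simp only [p, q]; field_simp; ring
  have pow_q : ∀ z : ℝ, 0 ≤ z → (z ^ p) ^ q = z ^ σ := fun z hz => by
    rw [← rpow_mul hz, hpq]
  have pow_two_sub_q : ∀ z : ℝ, 0 ≤ z → (z ^ p) ^ (2 - q) = z := fun z hz => by
    rw [← rpow_mul hz, hp2q, rpow_one]
  refine ⟨min q (2 - q), lt_min hq0 (by linarith), fun a b ha hb => ?_⟩
  have key := min_mul_sq_sub_le_rpow_sub_mul_rpow_sub hq0.le hq2.le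
    (rpow_nonneg ha p) (rpow_nonneg hb p)
  rw [pow_q a ha, pow_q b hb, pow_two_sub_q a ha, pow_two_sub_q b hb] at key
  rw [sq_abs, mul_comm (a - b)]
  exact key
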